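/- For all natural numbers ν, m, n with m+n > 0 and every rational x, one has ∑_{j=0}^{m} C(m, j)·C(n+j, ν)·B_{n+j−ν}(x) = ∑_{k=0}^{n} (−1)^{n−k}·C(n, k)·C(m+k, ν)·B_{m+k−ν}(x+1). (In any term where the subscript n+j−ν or m+k−ν would be negative, the binomial coefficient C(n+j,ν) resp. C(m+k,ν) is 0, so the term vanishes and natural-number subtraction in the subscript is harmless.) -/

import Mathlib

open Finset Polynomial

/-! Umbral calculus. The linear map `U : X ^ j ↦ B_j` commutes with the shift `p ↦ p(X + 1)`,
because on `X ^ j` this is the Appell property `B_j(X + 1) = ∑ C(j,i) B_i`. For `ν = 0` the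
left side is `U(X ^ n (X + 1) ^ m)`, and `X ^ n (X + 1) ^ m` is the shift of `X ^ m (X - 1) ^ n`,
whose image under `U` is the right side before shifting. The general case follows by
differentiating `ν` times, since `D^ν B_l = ν! C(l,ν) B_{l-ν}`. -/

namespace Polynomial

theorem bernoulli_comp_X_add_one (n : ℕ) :
    (bernoulli n).comp (X + 1) = ∑ k ∈ range (n + 1), (n.choose k : ℚ) • bernoulli k := by
  cases n with
  | zero => simp
  | succ n =>
    rw [sum_range_succ, sum_bernoulli, add_comm X, bernoulli_comp_one_add_X]
    simp only [Nat.choose_self, Nat.cast_one, one_smul, ← C_mul_X_pow_eq_monomial,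
      add_tsub_cancel_right, Nat.cast_add, nsmul_eq_mul, map_add, map_natCast, C_1]
    ring

noncomputable def bernoulliUmbral : ℚ[X] →ₗ[ℚ] ℚ[X] :=
  lsum fun j => LinearMap.toSpanSingleton ℚ ℚ[X] (bernoulli j)

theorem bernoulliUmbral_monomial (j : ℕ) (a : ℚ) :
    bernoulliUmbral (monomial j a) = a • bernoulli j := by
  simp [bernoulliUmbral]

theorem bernoulliUmbral_X_pow_mul_X_add_C_pow (n m : ℕ) (a : ℚ) :
    bernoulliUmbral (X ^ n * (X + C a) ^ m)
      = ∑ j ∈ range (m + 1), (a ^ (m - j) * m.choose j) • bernoulli (n + j) := by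
  rw [add_pow, mul_sum, map_sum]
  refine sum_congr rfl fun j _ => ?_
  rw [← bernoulliUmbral_monomial, ← C_mul_X_pow_eq_monomial]
  congr 1
  simp only [map_mul, C_pow, map_natCast, pow_add]
  ring

theorem bernoulliUmbral_taylor_one (q : ℚ[X]) :
    bernoulliUmbral (taylor 1 q) = taylor 1 (bernoulliUmbral q) := by
  suffices h : bernoulliUmbral ∘ₗ taylor 1 = taylor 1 ∘ₗ bernoulliUmbral from
    LinearMap.congr_fun h q
  refine lhom_ext' fun j => LinearMap.ext fun a => ?_
  have h := bernoulliUmbral_X_pow_mul_X_add_C_pow 0 j 1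
  simp only [zero_add, pow_zero, one_mul, one_pow] at h
  simp only [LinearMap.comp_apply]
  rw [taylor_monomial, ← smul_eq_C_mul, map_smul, h, bernoulliUmbral_monomial, map_smul,
    taylor_apply, C_1, bernoulli_comp_X_add_one]

theorem iterate_derivative_taylor {R : Type*} [CommSemiring R] (k : ℕ) (r : R) (p : R[X]) :
    derivative^[k] (taylor r p) = taylor r (derivative^[k] p) := by
  induction k generalizing p with
  | zero => rfl
  | succ k ih =>
    rw [Function.iterate_succ_apply, Function.iterate_succ_apply, ← ih]
    simp [taylor_apply, derivative_comp]

theorem iterate_derivative_bernoulli (k l : ℕ) :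
    derivative^[k] (bernoulli l) = (l.descFactorial k : ℚ) • bernoulli (l - k) := by
  induction k with
  | zero => simp
  | succ k ih =>
    rw [Function.iterate_succ_apply', ih, derivative_smul, derivative_bernoulli, Nat.sub_sub,
      Nat.descFactorial_succ, ← C_eq_natCast, ← smul_eq_C_mul, smul_smul, Nat.cast_mul,
      mul_comm]

theorem sum_choose_smul_bernoulli_add (m n : ℕ) :
    ∑ j ∈ range (m + 1), (m.choose j : ℚ) • bernoulli (n + j)
      = taylor 1
          (∑ k ∈ range (n + 1), ((-1) ^ (n - k) * n.choose k : ℚ) • bernoulli (m + k)) := by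
  have hshift : taylor (1 : ℚ) (X ^ m * (X + C (-1)) ^ n) = X ^ n * (X + C 1) ^ m := by
    rw [taylor_mul, taylor_pow, taylor_pow, map_add, taylor_X, taylor_C, add_assoc, ← C_add,
      add_neg_cancel, C_0, add_zero, mul_comm]
  calc ∑ j ∈ range (m + 1), (m.choose j : ℚ) • bernoulli (n + j)
      = bernoulliUmbral (X ^ n * (X + C 1) ^ m) := by
        simp only [bernoulliUmbral_X_pow_mul_X_add_C_pow, one_pow, one_mul]
    _ = _ := by
        rw [← hshift, bernoulliUmbral_taylor_one, bernoulliUmbral_X_pow_mul_X_add_C_pow]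

end Polynomial

theorem bernoulli_poly_shift_identity_general (ν m n : ℕ) (x : ℚ) :
    ∑ j ∈ Finset.range (m + 1),
      (m.choose j : ℚ) * ((n + j).choose ν) * (Polynomial.bernoulli (n + j - ν)).eval x
    = ∑ k ∈ Finset.range (n + 1),
        (-1 : ℚ) ^ (n - k) * (n.choose k) * ((m + k).choose ν) *
          (Polynomial.bernoulli (m + k - ν)).eval (x + 1) := by
  have key := congr(eval x (derivative^[ν] $(sum_choose_smul_bernoulli_add m n)))
  simp only [iterate_derivative_taylor, taylor_eval, iterate_derivative_sum,
    iterate_derivative_smul, iterate_derivative_bernoulli, eval_finsetSum, eval_smul,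
    smul_eq_mul, Nat.descFactorial_eq_factorial_mul_choose, Nat.cast_mul] at key
  have hfact : (ν.factorial : ℚ) ≠ 0 := Nat.cast_ne_zero.2 ν.factorial_ne_zero
  refine mul_left_cancel₀ hfact ?_
  simp only [mul_sum]
  refine (sum_congr rfl fun j _ => ?_).trans (key.trans (sum_congr rfl fun k _ => ?_)) <;> ring

theorem bernoulli_poly_shift_identity (ν m n : ℕ) (hmn : 0 < m + n) (x : ℚ) :
    ∑ j ∈ Finset.range (m + 1),
      (m.choose j : ℚ) * ((n + j).choose ν) * (Polynomial.bernoulli (n + j - ν)).eval x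
    = ∑ k ∈ Finset.range (n + 1),
        (-1 : ℚ) ^ (n - k) * (n.choose k) * ((m + k).choose ν) *
          (Polynomial.bernoulli (m + k - ν)).eval (x + 1) :=
  bernoulli_poly_shift_identity_general ν m n x
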